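/- arXiv:2211.04358 — 2 statements merged into one kernel-verified Lean document; each statement's English description precedes it below -/
import Mathlib

section
/- Let n ≥ 1 and let L : [0,∞) → ℝ^{n×n} be a measurable, locally essentially bounded matrix-valued function such that for almost every t ≥ 0 the matrix L(t) has nonpositive off-diagonal entries and zero column sums (𝟙ᵀL(t) = 0). Fix s ≥ 0 and let Φ(·,s) : [s,∞) → ℝ^{n×n} be a locally absolutely continuous matrix function with Φ(s,s) = I and dΦ(t,s)/dt = −L(t)Φ(t,s) for almost every t ≥ s. Then for every t ≥ s the matrix Φ(t,s) is column-stochastic, i.e. all entries of Φ(t,s) are nonnegative and each column of Φ(t,s) sums to 1. -/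
open MeasureTheory Matrix

attribute [local instance] Matrix.normedAddCommGroup Matrix.normedSpace

/-!
Column sums are conserved because `𝟙ᵀ L(τ) = 0` kills the column sums of the integrand
`-L(τ) Φ(τ)`. For nonnegativity, fix `t`, a bound `C` for `L` on `[s, t]`, and a column of `Φ`;
let `f(u)` be the sum of the negative parts of its entries. If an entry is negative at time `u`,
go back to the last time `v ≤ u` at which it was nonnegative. On `(v, u]` the entry is
nonpositive, and as `-L(τ)` is Metzler, only the negative entries of the column can push it
down, which bounds its negative part at `u` by `C ∫ₛᵘ f`. Summing gives `f(u) ≤ n C ∫ₛᵘ f`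
with `f(s) = 0`, and Grönwall's inequality forces `f = 0`.
-/

open Set Filter Topology

theorem eq_zero_of_le_mul_integral {f : ℝ → ℝ} {a b K : ℝ} (hf : ContinuousOn f (Icc a b))
    (hf₀ : ∀ u ∈ Icc a b, 0 ≤ f u) (hle : ∀ u ∈ Icc a b, f u ≤ K * ∫ τ in a..u, f τ) :
    ∀ u ∈ Icc a b, f u = 0 := by
  set F : ℝ → ℝ := fun u => ∫ τ in a..u, f τ
  have hF_nonneg : ∀ u ∈ Icc a b, 0 ≤ F u := fun u hu =>
    intervalIntegral.integral_nonneg hu.1 fun τ hτ => hf₀ τ ⟨hτ.1, hτ.2.trans hu.2⟩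
  have hF_deriv : ∀ x ∈ Ico a b, HasDerivWithinAt F (f x) (Ici x) x := by
    intro x hx
    have hnhds : Icc a b ∈ 𝓝[>] x := Icc_mem_nhdsGT_of_mem hx
    exact intervalIntegral.integral_hasDerivWithinAt_right
      ((hf.mono (Icc_subset_Icc_right hx.2.le)).intervalIntegrable_of_Icc hx.1)
      ((hf.stronglyMeasurableAtFilter_nhdsWithin measurableSet_Icc x).filter_mono
        (nhdsWithin_le_of_mem hnhds))
      ((hf x (Ico_subset_Icc_self hx)).mono_of_mem_nhdsWithin hnhds)
  intro u hu
  have hab : a ≤ b := hu.1.trans hu.2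
  have hF_cont : ContinuousOn F (Icc a b) := by
    have h := intervalIntegral.continuousOn_primitive_interval'
      (hf.intervalIntegrable_of_Icc (μ := volume) hab) left_mem_uIcc
    rwa [uIcc_of_le hab] at h
  have hF_zero : F u = 0 := by
    refine eq_zero_of_abs_deriv_le_mul_abs_self_of_eq_zero_right (K := K) hF_cont hF_deriv
      intervalIntegral.integral_same (fun x hx => ?_) u hu
    have hx' := Ico_subset_Icc_self hx
    rw [Real.norm_of_nonneg (hf₀ x hx'), Real.norm_of_nonneg (hF_nonneg x hx')]
    exact hle x hx'
  exact le_antisymm (by simpa [F, hF_zero] using hle u hu) (hf₀ u hu)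

theorem ContinuousOn.exists_nonneg_forall_Ioc_neg {g : ℝ → ℝ} {a b : ℝ}
    (hg : ContinuousOn g (Icc a b)) (hab : a ≤ b) (ha : 0 ≤ g a) :
    ∃ v ∈ Icc a b, 0 ≤ g v ∧ ∀ τ ∈ Ioc v b, g τ < 0 := by
  have hS : IsCompact (Icc a b ∩ g ⁻¹' Ici 0) :=
    isCompact_Icc.of_isClosed_subset
      (hg.preimage_isClosed_of_isClosed isClosed_Icc isClosed_Ici) inter_subset_left
  obtain ⟨v, ⟨hv, hgv⟩, hv_max⟩ := hS.exists_isGreatest ⟨a, ⟨left_mem_Icc.2 hab, ha⟩⟩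
  refine ⟨v, hv, hgv, fun τ hτ => not_le.1 fun hgτ => ?_⟩
  exact hτ.1.not_ge (hv_max ⟨⟨hv.1.trans hτ.1.le, hτ.2⟩, hgτ⟩)

theorem neg_mul_negPart_le_mul {a c x : ℝ} (hac : a ≤ c) (h : 0 ≤ a ∨ x ≤ 0) :
    -(c * x⁻) ≤ a * x := by
  rcases h with ha | hx
  · nlinarith [posPart_sub_negPart x, posPart_nonneg x, negPart_nonneg x]
  · rw [negPart_eq_neg.2 hx, mul_neg, neg_neg]
    exact mul_le_mul_of_nonpos_right hac hx

theorem eval_intervalIntegral {ι : Type*} [Fintype ι] {E : ι → Type*}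
    [∀ i, NormedAddCommGroup (E i)] [∀ i, NormedSpace ℝ (E i)] [∀ i, CompleteSpace (E i)]
    {f : ℝ → Π i, E i} {a b : ℝ} (hf : ∀ i, IntervalIntegrable (fun τ => f τ i) volume a b)
    (i : ι) : (∫ τ in a..b, f τ) i = ∫ τ in a..b, f τ i := by
  simp only [intervalIntegral, Pi.sub_apply]
  rw [eval_integral fun i => (hf i).1, eval_integral fun i => (hf i).2]

theorem MeasureTheory.AEStronglyMeasurable.intervalIntegrable_of_ae_norm_le {E : Type*}
    [NormedAddCommGroup E] {f : ℝ → E} (hf : AEStronglyMeasurable f volume) {a b C : ℝ}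
    (hC : ∀ᵐ τ, τ ∈ uIcc a b → ‖f τ‖ ≤ C) : IntervalIntegrable f volume a b :=
  (Measure.integrableOn_of_bounded isCompact_uIcc.measure_lt_top.ne hf
    ((ae_restrict_iff' measurableSet_uIcc).2 hC)).intervalIntegrable

theorem ContinuousOn.sum_negPart_apply {X ι : Type*} [TopologicalSpace X] [Fintype ι]
    {x : X → ι → ℝ} {S : Set X} (hx : ContinuousOn x S) :
    ContinuousOn (fun τ => ∑ k, (x τ k)⁻) S :=
  continuousOn_finsetSum _ fun k _ => by
    simp only [negPart_def]
    exact ((continuous_apply k).comp_continuousOn hx).neg.sup continuousOn_const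

theorem IntervalIntegrable.mono_set_Icc {E : Type*} [NormedAddCommGroup E] {f : ℝ → E}
    {μ : Measure ℝ} {a b c d : ℝ} (hf : IntervalIntegrable f μ a b) (hc : c ∈ Icc a b)
    (hd : d ∈ Icc a b) : IntervalIntegrable f μ c d :=
  hf.mono_set (uIcc_subset_uIcc (Icc_subset_uIcc hc) (Icc_subset_uIcc hd))

namespace Matrix

variable {ι : Type*} [Fintype ι]

def IsMetzler {R : Type*} [Zero R] [LE R] (A : Matrix ι ι R) : Prop :=
  ∀ i k, i ≠ k → 0 ≤ A i k

theorem IsMetzler.neg_mul_sum_negPart_le_mulVec {A : Matrix ι ι ℝ} (hA : A.IsMetzler) {C : ℝ}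
    (hC : ∀ i k, A i k ≤ C) {x : ι → ℝ} {i : ι} (hx : x i ≤ 0) :
    -(C * ∑ k, (x k)⁻) ≤ (A *ᵥ x) i := by
  rw [Finset.mul_sum, ← Finset.sum_neg_distrib]
  refine Finset.sum_le_sum fun k _ => neg_mul_negPart_le_mul (hC i k) ?_
  by_cases hik : i = k
  · exact Or.inr (hik ▸ hx)
  · exact Or.inl (hA i k hik)

theorem sum_mul_apply_eq_zero {l m n R : Type*} [Fintype l] [Fintype m]
    [NonUnitalNonAssocSemiring R] {A : Matrix l m R} (hA : ∀ k, ∑ i, A i k = 0)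
    (B : Matrix m n R) (j : n) : ∑ i, (A * B) i j = 0 := by
  simp only [mul_apply]
  rw [Finset.sum_comm]
  simp [← Finset.sum_mul, hA]

theorem sum_apply_eq_of_eq_add_integral_mul {κ : Type*} {A : ℝ → Matrix ι ι ℝ}
    {X : ℝ → Matrix ι κ ℝ} {a b : ℝ} {j : κ} (hA : ∀ᵐ τ, τ ∈ uIoc a b → ∀ k, ∑ i, A τ i k = 0)
    (hint : ∀ i, IntervalIntegrable (fun τ => (A τ * X τ) i j) volume a b)
    (heq : ∀ i, X b i j = X a i j + ∫ τ in a..b, (A τ * X τ) i j) :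
    ∑ i, X b i j = ∑ i, X a i j := by
  have hzero : ∫ τ in a..b, ∑ i, (A τ * X τ) i j = 0 := by
    rw [← intervalIntegral.integral_zero]
    refine intervalIntegral.integral_congr_ae ?_
    filter_upwards [hA] with τ hτ hmem using sum_mul_apply_eq_zero (hτ hmem) _ j
  rw [Finset.sum_congr rfl fun i _ => heq i, Finset.sum_add_distrib,
    ← intervalIntegral.integral_finsetSum fun i _ => hint i, hzero, add_zero]

/- With these norm instances `Matrix m n ℝ` carries no `ENormedAddMonoid` structure, so
matrix-valued integrability is not available and entries are extracted through the Pi type. -/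
theorem intervalIntegral_apply {m n : Type*} [Fintype m] [Fintype n] {G : ℝ → Matrix m n ℝ}
    {a b : ℝ} (hG : ∀ i j, IntervalIntegrable (fun τ => G τ i j) volume a b) (i : m) (j : n) :
    (∫ τ in a..b, G τ) i j = ∫ τ in a..b, G τ i j := by
  have hrow : ∀ i, IntervalIntegrable (fun τ => G τ i) volume a b := fun i =>
    ⟨Integrable.of_eval fun j => (hG i j).1, Integrable.of_eval fun j => (hG i j).2⟩
  exact (congrFun (eval_intervalIntegral (f := G) hrow i) j).trans
    (eval_intervalIntegral (hG i) j)

theorem intervalIntegrable_mul_apply {l m n : Type*} [Fintype m] {A : ℝ → Matrix l m ℝ}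
    {B : ℝ → Matrix m n ℝ} {a b : ℝ}
    (hA : ∀ i k, IntervalIntegrable (fun τ => A τ i k) volume a b)
    (hB : ContinuousOn B (uIcc a b)) (i : l) (j : n) :
    IntervalIntegrable (fun τ => (A τ * B τ) i j) volume a b := by
  have hterm : ∀ k, IntervalIntegrable (fun τ => A τ i k * B τ k j) volume a b := fun k =>
    (hA i k).mul_continuousOn ((continuous_id.matrix_elem k j).comp_continuousOn hB)
  simpa only [mul_apply, Finset.sum_fn] using
    IntervalIntegrable.sum Finset.univ fun k _ => hterm k

end Matrix

section Positivity

variable {ι : Type*} [Fintype ι] {A : ℝ → Matrix ι ι ℝ} {x : ℝ → ι → ℝ} {a b C : ℝ}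

theorem negPart_le_mul_integral_sum_negPart (hx : ContinuousOn x (Icc a b)) (hxa : 0 ≤ x a)
    (hC : 0 ≤ C) (hA : ∀ᵐ τ, τ ∈ Icc a b → (A τ).IsMetzler ∧ ∀ i k, A τ i k ≤ C)
    (hint : ∀ i, IntervalIntegrable (fun τ => (A τ *ᵥ x τ) i) volume a b)
    (heq : ∀ u ∈ Icc a b, ∀ i, x u i = x a i + ∫ τ in a..u, (A τ *ᵥ x τ) i)
    {u : ℝ} (hu : u ∈ Icc a b) (i : ι) :
    (x u i)⁻ ≤ C * ∫ τ in a..u, ∑ k, (x τ k)⁻ := by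
  set f : ℝ → ℝ := fun τ => ∑ k, (x τ k)⁻
  have hf_nonneg : ∀ τ, 0 ≤ f τ := fun τ => Finset.sum_nonneg fun k _ => negPart_nonneg _
  rcases le_or_gt 0 (x u i) with hxu | hxu
  · rw [negPart_eq_zero.2 hxu]
    exact mul_nonneg hC (intervalIntegral.integral_nonneg hu.1 fun τ _ => hf_nonneg τ)
  have ha : a ∈ Icc a b := left_mem_Icc.2 (hu.1.trans hu.2)
  have hx_i : ContinuousOn (fun τ => x τ i) (Icc a u) :=
    (continuous_apply i).comp_continuousOn (hx.mono (Icc_subset_Icc_right hu.2))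
  obtain ⟨v, hv, hxv, hx_neg⟩ := hx_i.exists_nonneg_forall_Ioc_neg hu.1 (hxa i)
  have hv' : v ∈ Icc a b := ⟨hv.1, hv.2.trans hu.2⟩
  have hf_int : IntervalIntegrable f volume a b :=
    hx.sum_negPart_apply.intervalIntegrable_of_Icc (ha.1.trans ha.2)
  have hincr : x u i - x v i = ∫ τ in v..u, (A τ *ᵥ x τ) i := by
    rw [heq u hu, heq v hv', add_sub_add_left_eq_sub,
      intervalIntegral.integral_interval_sub_left ((hint i).mono_set_Icc ha hu)
        ((hint i).mono_set_Icc ha hv')]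
  have hlower : ∫ τ in v..u, -(C * f τ) ≤ ∫ τ in v..u, (A τ *ᵥ x τ) i := by
    rw [intervalIntegral.integral_of_le hv.2, intervalIntegral.integral_of_le hv.2]
    refine setIntegral_mono_ae_restrict (((hf_int.mono_set_Icc hv' hu).const_mul C).neg.1)
      ((hint i).mono_set_Icc hv' hu).1 ?_
    rw [EventuallyLE, ae_restrict_iff' measurableSet_Ioc]
    filter_upwards [hA] with τ hAτ hτ
    obtain ⟨hMetzler, hC_le⟩ := hAτ ⟨hv.1.trans hτ.1.le, hτ.2.trans hu.2⟩
    exact hMetzler.neg_mul_sum_negPart_le_mulVec hC_le (hx_neg τ hτ).le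
  have hmono : ∫ τ in v..u, f τ ≤ ∫ τ in a..u, f τ :=
    intervalIntegral.integral_mono_interval hv.1 hv.2 le_rfl (Eventually.of_forall hf_nonneg)
      (hf_int.mono_set_Icc ha hu)
  rw [intervalIntegral.integral_neg, intervalIntegral.integral_const_mul] at hlower
  calc (x u i)⁻ = -x u i := negPart_eq_neg.2 hxu.le
    _ ≤ C * ∫ τ in v..u, f τ := by linarith
    _ ≤ C * ∫ τ in a..u, f τ := mul_le_mul_of_nonneg_left hmono hC

theorem nonneg_of_eq_add_integral_mulVec (hx : ContinuousOn x (Icc a b)) (hxa : 0 ≤ x a)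
    (hC : 0 ≤ C) (hA : ∀ᵐ τ, τ ∈ Icc a b → (A τ).IsMetzler ∧ ∀ i k, A τ i k ≤ C)
    (hint : ∀ i, IntervalIntegrable (fun τ => (A τ *ᵥ x τ) i) volume a b)
    (heq : ∀ u ∈ Icc a b, ∀ i, x u i = x a i + ∫ τ in a..u, (A τ *ᵥ x τ) i)
    {u : ℝ} (hu : u ∈ Icc a b) : 0 ≤ x u := by
  set f : ℝ → ℝ := fun τ => ∑ k, (x τ k)⁻
  have hf_nonneg : ∀ τ, 0 ≤ f τ := fun τ => Finset.sum_nonneg fun k _ => negPart_nonneg _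
  have hf_le : ∀ w ∈ Icc a b, f w ≤ (Fintype.card ι * C) * ∫ τ in a..w, f τ := fun w hw =>
    calc f w ≤ ∑ _k : ι, C * ∫ τ in a..w, f τ := Finset.sum_le_sum fun k _ =>
          negPart_le_mul_integral_sum_negPart hx hxa hC hA hint heq hw k
      _ = (Fintype.card ι * C) * ∫ τ in a..w, f τ := by
          rw [Finset.sum_const, Finset.card_univ, nsmul_eq_mul, mul_assoc]
  have hf_zero : f u = 0 :=
    eq_zero_of_le_mul_integral hx.sum_negPart_apply (fun w _ => hf_nonneg w) hf_le u hu
  intro i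
  have hi : (x u i)⁻ = 0 :=
    (Finset.sum_eq_zero_iff_of_nonneg fun k _ => negPart_nonneg _).1 hf_zero i
      (Finset.mem_univ i)
  exact negPart_eq_zero.1 hi

theorem nonneg_apply_of_eq_add_integral_mul {κ : Type*} {X : ℝ → Matrix ι κ ℝ}
    (hX : ContinuousOn X (Icc a b)) (hXa : ∀ i j, 0 ≤ X a i j) (hC : 0 ≤ C)
    (hA : ∀ᵐ τ, τ ∈ Icc a b → (A τ).IsMetzler ∧ ∀ i k, A τ i k ≤ C)
    (hint : ∀ i j, IntervalIntegrable (fun τ => (A τ * X τ) i j) volume a b)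
    (heq : ∀ u ∈ Icc a b, ∀ i j, X u i j = X a i j + ∫ τ in a..u, (A τ * X τ) i j)
    {u : ℝ} (hu : u ∈ Icc a b) (i : ι) (j : κ) : 0 ≤ X u i j :=
  nonneg_of_eq_add_integral_mulVec (x := fun τ k => X τ k j)
    (continuousOn_pi.2 fun k => (continuous_id.matrix_elem k j).comp_continuousOn hX)
    (fun k => hXa k j) hC hA (fun k => hint k j) (fun u hu k => heq u hu k j) hu i

end Positivity

theorem transition_matrix_column_stochastic_general
    (n : ℕ)
    (L : ℝ → Matrix (Fin n) (Fin n) ℝ)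
    (hLmeas : ∀ i j, Measurable fun t => L t i j)
    (hLbdd : ∀ T : ℝ, ∃ C : ℝ, ∀ᵐ t ∂(volume : Measure ℝ),
      t ∈ Set.Icc (0 : ℝ) T → ∀ i j, |L t i j| ≤ C)
    (hLap : ∀ᵐ t ∂(volume : Measure ℝ), 0 ≤ t →
      (∀ i j, i ≠ j → L t i j ≤ 0) ∧ (∀ j, ∑ i, L t i j = 0))
    (s : ℝ) (hs : 0 ≤ s)
    (Φ : ℝ → Matrix (Fin n) (Fin n) ℝ)
    (hΦcont : ContinuousOn Φ (Set.Ici s))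
    (hΦ : ∀ t, s ≤ t → Φ t = 1 + ∫ τ in s..t, -(L τ) * Φ τ) :
    ∀ t, s ≤ t → (∀ i j, 0 ≤ Φ t i j) ∧ (∀ j, ∑ i, Φ t i j = 1) := by
  intro t ht
  obtain ⟨C, hC⟩ := hLbdd t
  have hL : ∀ᵐ τ, τ ∈ Icc s t → (-(L τ)).IsMetzler ∧ (∀ k, ∑ i, -(L τ) i k = 0) ∧
      ∀ i k, |L τ i k| ≤ max C 0 := by
    filter_upwards [hLap, hC] with τ hLapτ hCτ hτ
    obtain ⟨hoff, hsum⟩ := hLapτ (hs.trans hτ.1)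
    exact ⟨fun i k hik => neg_nonneg.2 (hoff i k hik), fun k => by simp [hsum k],
      fun i k => (hCτ ⟨hs.trans hτ.1, hτ.2⟩ i k).trans (le_max_left C 0)⟩
  have hG_int : ∀ i j, IntervalIntegrable (fun τ => (-(L τ) * Φ τ) i j) volume s t := by
    refine intervalIntegrable_mul_apply (fun i k => ?_)
      (uIcc_of_le ht ▸ hΦcont.mono Icc_subset_Ici_self)
    refine ((hLmeas i k).aestronglyMeasurable.intervalIntegrable_of_ae_norm_le
      (C := max C 0) ?_).neg
    filter_upwards [hL] with τ hτ hmem using (hτ (uIcc_of_le ht ▸ hmem)).2.2 i k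
  have hΦs : Φ s = 1 := by simpa using hΦ s le_rfl
  have hΦ_apply : ∀ u ∈ Icc s t, ∀ i j,
      Φ u i j = Φ s i j + ∫ τ in s..u, (-(L τ) * Φ τ) i j := fun u hu i j => by
    rw [hΦ u hu.1, hΦs, Matrix.add_apply, intervalIntegral_apply fun i j =>
      (hG_int i j).mono_set_Icc (left_mem_Icc.2 ht) hu]
  refine ⟨fun i j => ?_, fun j => ?_⟩
  · refine nonneg_apply_of_eq_add_integral_mul (hΦcont.mono Icc_subset_Ici_self)
      (fun k l => hΦs ▸ zero_le_one_elem k l) (le_max_right C 0) ?_ hG_int hΦ_apply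
      (right_mem_Icc.2 ht) i j
    filter_upwards [hL] with τ hτ hmem
    exact ⟨(hτ hmem).1, fun i k => (neg_le_abs _).trans ((hτ hmem).2.2 i k)⟩
  · rw [sum_apply_eq_of_eq_add_integral_mul ?_ (fun i => hG_int i j)
      (fun i => hΦ_apply t (right_mem_Icc.2 ht) i j), hΦs]
    · exact Fintype.sum_ite_eq' j fun _ => 1
    filter_upwards [hL] with τ hτ hmem
    exact (hτ (Ioc_subset_Icc_self (uIoc_of_le ht ▸ hmem))).2.1

/-- **Column-stochasticity of the transition matrix.**
If `L(t)` has nonpositive off-diagonal entries and zero column sums for a.e. `t ≥ 0`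
(measurable, locally essentially bounded), and `Φ(·)` is a (Carathéodory, i.e. continuous
and given by the integral equation) solution of `Φ̇(t) = -L(t)Φ(t)`, `Φ(s) = I`, then
`Φ(t)` is column-stochastic for every `t ≥ s`. -/
theorem transition_matrix_column_stochastic
    (n : ℕ) (hn : 1 ≤ n)
    (L : ℝ → Matrix (Fin n) (Fin n) ℝ)
    (hLmeas : ∀ i j, Measurable fun t => L t i j)
    (hLbdd : ∀ T : ℝ, ∃ C : ℝ, ∀ᵐ t ∂(volume : Measure ℝ),
      t ∈ Set.Icc (0 : ℝ) T → ∀ i j, |L t i j| ≤ C)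
    (hLap : ∀ᵐ t ∂(volume : Measure ℝ), 0 ≤ t →
      (∀ i j, i ≠ j → L t i j ≤ 0) ∧ (∀ j, ∑ i, L t i j = 0))
    (s : ℝ) (hs : 0 ≤ s)
    (Φ : ℝ → Matrix (Fin n) (Fin n) ℝ)
    (hΦcont : ContinuousOn Φ (Set.Ici s))
    (hΦ : ∀ t, s ≤ t → Φ t = 1 + ∫ τ in s..t, -(L τ) * Φ τ) :
    ∀ t, s ≤ t → (∀ i j, 0 ≤ Φ t i j) ∧ (∀ j, ∑ i, Φ t i j = 1) :=
  transition_matrix_column_stochastic_general n L hLmeas hLbdd hLap s hs Φ hΦcont hΦ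
end

section
/- Let f₁, f₂ : ℝ → ℝ be defined by f₁(z) = (1/2)(z−1)² and f₂(z) = (1/2)(z+1)². Then the unique minimizer of f₁ + f₂ is z = 0; moreover, for every constant step-size α > 0, every differentiable solution x : [0,∞) → ℝ² of the averaging-based distributed optimization dynamics ẋ(t) = [[−1−α,1],[1,−1−α]]x(t) + α(1,−1)ᵀ converges to (α/(2+α))·(1,−1)ᵀ, whose components α/(2+α) and −α/(2+α) are both different from the minimizer 0. Hence for no constant α > 0 do the agents' states converge to the minimizer of f₁ + f₂. -/
open Matrix Filter Set Topology

/-! The sum `x₀ + x₁` and the disagreement `x₀ - x₁` of the two agents decouple into the scalar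
equations `ṡ = -α s` and `ḋ = -(2 + α) (d - 2α/(2 + α))`, whose solutions converge exponentially
to `0` and `2α/(2 + α)`. Hence `x → (α/(2 + α)) (1, -1)`: the consensus term alone cannot
overcome the constant pull `α` of each agent towards its own minimizer `±1`. -/

lemma eq_mul_exp_of_hasDerivWithinAt_Ici {y : ℝ → ℝ} {c : ℝ}
    (h : ∀ t, 0 ≤ t → HasDerivWithinAt y (c * y t) (Ici 0) t) {t : ℝ} (ht : 0 ≤ t) :
    y t = y 0 * Real.exp (c * t) := by
  -- `exp (-c s) * y s` has zero right derivative, hence is constant.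
  set g : ℝ → ℝ := fun s => Real.exp (-c * s) * y s
  have hexp : ∀ s, HasDerivAt (fun s => Real.exp (-c * s)) (Real.exp (-c * s) * -c) s :=
    fun s => ((hasDerivAt_id s).const_mul (-c)).exp.congr_deriv (by simp)
  have hderiv : ∀ s ∈ Ico 0 t, HasDerivWithinAt g 0 (Ici s) s := fun s hs =>
    ((hexp s).hasDerivWithinAt.mul ((h s hs.1).mono (Ici_subset_Ici.2 hs.1))).congr_deriv
      (by ring)
  have hcont : ContinuousOn g (Icc 0 t) := fun s hs =>
    ((hexp s).continuousAt.continuousWithinAt.mul (h s hs.1).continuousWithinAt).mono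
      Icc_subset_Ici_self
  have hgt : Real.exp (-c * t) * y t = y 0 := by
    simpa [g] using constant_of_has_deriv_right_zero hcont hderiv t ⟨ht, le_rfl⟩
  calc y t = Real.exp (c * t) * (Real.exp (-c * t) * y t) := by
          rw [← mul_assoc, ← Real.exp_add]; simp
    _ = y 0 * Real.exp (c * t) := by rw [hgt, mul_comm]

lemma tendsto_of_hasDerivWithinAt_Ici_mul_sub {u : ℝ → ℝ} {c L : ℝ} (hc : c < 0)
    (h : ∀ t, 0 ≤ t → HasDerivWithinAt u (c * (u t - L)) (Ici 0) t) :
    Tendsto u atTop (𝓝 L) := by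
  have hsol : ∀ t, 0 ≤ t → u t = (u 0 - L) * Real.exp (c * t) + L := fun t ht => by
    have := eq_mul_exp_of_hasDerivWithinAt_Ici (y := fun s => u s - L)
      (fun s hs => (h s hs).sub_const L) ht
    linarith
  have hdecay : Tendsto (fun t => Real.exp (c * t)) atTop (𝓝 0) :=
    Real.tendsto_exp_atBot.comp (tendsto_id.const_mul_atTop_of_neg hc)
  have hlim := (hdecay.const_mul (u 0 - L)).add_const L
  rw [mul_zero, zero_add] at hlim
  exact hlim.congr' <| (eventually_ge_atTop 0).mono fun t ht => (hsol t ht).symm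

lemma hasDerivWithinAt_averaging_components {α t : ℝ} {s : Set ℝ} {x : ℝ → Fin 2 → ℝ}
    (hx : HasDerivWithinAt x ((!![-1 - α, 1; 1, -1 - α]).mulVec (x t) + α • ![1, -1]) s t) :
    HasDerivWithinAt (fun t => x t 0) (-(x t 0 - x t 1) - α * (x t 0 - 1)) s t ∧
      HasDerivWithinAt (fun t => x t 1) (-(x t 1 - x t 0) - α * (x t 1 + 1)) s t := by
  constructor
  · refine (hasDerivWithinAt_pi.1 hx 0).congr_deriv ?_
    simp [dotProduct, Fin.sum_univ_two]; ring
  · refine (hasDerivWithinAt_pi.1 hx 1).congr_deriv ?_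
    simp [dotProduct, Fin.sum_univ_two]; ring

lemma tendsto_averaging_dynamics {α : ℝ} (hα : 0 < α) {x : ℝ → Fin 2 → ℝ}
    (hx : ∀ t, 0 ≤ t → HasDerivWithinAt x
      ((!![-1 - α, 1; 1, -1 - α]).mulVec (x t) + α • ![1, -1]) (Ici 0) t) :
    Tendsto x atTop (𝓝 ((α / (2 + α)) • ![1, -1])) := by
  have hcomp := fun t ht => hasDerivWithinAt_averaging_components (hx t ht)
  have hsum : Tendsto (fun t => x t 0 + x t 1) atTop (𝓝 0) :=
    tendsto_of_hasDerivWithinAt_Ici_mul_sub (c := -α) (by linarith) fun t ht =>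
      ((hcomp t ht).1.add (hcomp t ht).2).congr_deriv (by ring)
  have hdiff : Tendsto (fun t => x t 0 - x t 1) atTop (𝓝 (2 * α / (2 + α))) :=
    tendsto_of_hasDerivWithinAt_Ici_mul_sub (c := -(2 + α)) (by linarith) fun t ht =>
      ((hcomp t ht).1.sub (hcomp t ht).2).congr_deriv (by field_simp; ring)
  rw [tendsto_pi_nhds]
  intro i
  fin_cases i
  · convert (hsum.add hdiff).div_const 2 using 2 <;> simp; ring
  · convert (hsum.sub hdiff).div_const 2 using 2 <;> simp; ring

/-- **Failure of convergence to the optimizer with constant step-size.**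
For `f₁(z) = ½(z-1)²`, `f₂(z) = ½(z+1)²`, the unique minimizer of `f₁ + f₂` is `0`;
for every constant step-size `α > 0`, every differentiable solution of
`ẋ = [[-1-α,1],[1,-1-α]]x + α(1,-1)ᵀ` on `[0,∞)` converges to `(α/(2+α))·(1,-1)ᵀ`,
whose components `α/(2+α)` and `-α/(2+α)` are nonzero; hence the agents' states do not
converge to the minimizer `(0,0)`. -/
theorem constant_stepsize_misses_optimizer
    (f₁ f₂ : ℝ → ℝ)
    (hf₁ : ∀ z, f₁ z = (1/2) * (z - 1)^2) (hf₂ : ∀ z, f₂ z = (1/2) * (z + 1)^2) :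
    ((∀ z, f₁ 0 + f₂ 0 ≤ f₁ z + f₂ z) ∧
      (∀ z, (∀ y, f₁ z + f₂ z ≤ f₁ y + f₂ y) → z = 0)) ∧
    (∀ α : ℝ, 0 < α → ∀ x : ℝ → Fin 2 → ℝ,
      (∀ t : ℝ, 0 ≤ t →
        HasDerivWithinAt x
          ((!![-1 - α, 1; 1, -1 - α]).mulVec (x t) + α • ![1, -1]) (Set.Ici (0:ℝ)) t) →
      (Tendsto x atTop (nhds ((α / (2 + α)) • ![1, -1])) ∧
        ((α / (2 + α)) • ![(1:ℝ), -1]) 0 ≠ 0 ∧ ((α / (2 + α)) • ![(1:ℝ), -1]) 1 ≠ 0 ∧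
        ¬ Tendsto x atTop (nhds (fun _ : Fin 2 => (0:ℝ))))) := by
  have hsum : ∀ z, f₁ z + f₂ z = z ^ 2 + 1 := fun z => by rw [hf₁, hf₂]; ring
  refine ⟨⟨fun z => ?_, fun z hz => ?_⟩, fun α hα x hx => ?_⟩
  · rw [hsum, hsum]; nlinarith [sq_nonneg z]
  · have := hz 0
    rw [hsum, hsum] at this
    nlinarith
  · have hlim := tendsto_averaging_dynamics hα hx
    have hne : α / (2 + α) ≠ 0 := by positivity
    refine ⟨hlim, by simpa using hne, by simpa using hne, fun hzero => hne ?_⟩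
    simpa using congrFun (tendsto_nhds_unique hlim hzero) 0
end
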